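/- arXiv:2309.15468 — 3 statements merged into one kernel-verified Lean document; each statement's English description precedes it below -/
import Mathlib

section
/- Occurrences of an injective pattern cannot overlap: if a configuration c matches the injective pattern e at position n, then for every s with 1 ≤ s ≤ R, c does not match e at n + s and does not match e at n - s. -/
/-- `c` matches the pattern `e` (with radii `L`, `R`, wildcard at position 0) at `n`. -/
def Matches (L R : ℕ) (e : ℤ → ZMod 2) (c : ℤ → ZMod 2) (n : ℤ) : Prop :=
  ∀ j : ℤ, -(L : ℤ) ≤ j → j ≤ (R : ℤ) → j ≠ 0 → c (n + j) = e j

/-- `e` is an injective pattern for radii `L`, `R`: every prefix sub-string containing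
the wildcard differs from the suffix sub-string of the same length. -/
def IsInjectivePattern (L R : ℕ) (e : ℤ → ZMod 2) : Prop :=
  ∀ s : ℤ, 1 ≤ s → s ≤ (R : ℤ) →
    ∃ j : ℤ, -(L : ℤ) ≤ j ∧ j ≤ (R : ℤ) - s ∧ j ≠ 0 ∧ j + s ≠ 0 ∧ e j ≠ e (j + s)

open Classical in
/-- The global transformation induced by the pattern `e`. -/
noncomputable def tau (L R : ℕ) (e : ℤ → ZMod 2) (c : ℤ → ZMod 2) : ℤ → ZMod 2 :=
  fun n => if Matches L R e c n then 1 + c n else c n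

theorem Matches.not_matches_add {L R : ℕ} {e c : ℤ → ZMod 2} {n s : ℤ}
    (he : IsInjectivePattern L R e) (hn : Matches L R e c n) (hs : 1 ≤ s) (hsR : s ≤ R) :
    ¬ Matches L R e c (n + s) := by
  intro hns
  obtain ⟨j, hjL, hjR, hj0, hjs0, hne⟩ := he s hs hsR
  -- The cell `n + s + j` is offset `j` of the occurrence at `n + s` and offset `j + s` of the one at `n`.
  refine hne ?_
  calc e j = c (n + s + j) := (hns j hjL (by omega) hj0).symm
    _ = c (n + (j + s)) := by ring_nf
    _ = e (j + s) := hn (j + s) (by omega) (by omega) hjs0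

theorem matches_no_overlap_general (L R : ℕ)
    (e : ℤ → ZMod 2) (he : IsInjectivePattern L R e)
    (c : ℤ → ZMod 2) (n : ℤ) (hn : Matches L R e c n) :
    ∀ s : ℤ, 1 ≤ s → s ≤ (R : ℤ) →
      ¬ Matches L R e c (n + s) ∧ ¬ Matches L R e c (n - s) := by
  intro s hs hsR
  refine ⟨hn.not_matches_add he hs hsR, fun hns => ?_⟩
  exact hns.not_matches_add he hs hsR (by rwa [sub_add_cancel])

/-- occurrences of an injective pattern cannot overlap. -/
theorem matches_no_overlap (L R : ℕ) (hL : 1 ≤ L) (hLR : L ≤ R)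
    (e : ℤ → ZMod 2) (he : IsInjectivePattern L R e)
    (c : ℤ → ZMod 2) (n : ℤ) (hn : Matches L R e c n) :
    ∀ s : ℤ, 1 ≤ s → s ≤ (R : ℤ) →
      ¬ Matches L R e c (n + s) ∧ ¬ Matches L R e c (n - s) :=
  matches_no_overlap_general L R e he c n hn
end

section
/- The injective pattern keeps its structure during the revolution: for every configuration c and every position n, the image τ_e(c) matches the injective pattern e at n if and only if c matches e at n. -/
section

variable {L R : ℕ} {e c d : ℤ → ZMod 2} {n : ℤ}

theorem Matches.congr {c' : ℤ → ZMod 2}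
    (hcc' : ∀ j : ℤ, -(L : ℤ) ≤ j → j ≤ (R : ℤ) → j ≠ 0 → c (n + j) = c' (n + j))
    (h : Matches L R e c n) : Matches L R e c' n :=
  fun j hjL hjR hj0 => (hcc' j hjL hjR hj0).symm.trans (h j hjL hjR hj0)

theorem tau_apply_of_not_matches {m : ℤ} (h : ¬Matches L R e c m) : tau L R e c m = c m :=
  if_neg h

theorem IsInjectivePattern.not_matches_add_pos (he : IsInjectivePattern L R e)
    (hd : Matches L R e d n) {s : ℤ} (hs₁ : 1 ≤ s) (hsR : s ≤ (R : ℤ)) :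
    ¬Matches L R e d (n + s) := by
  intro hds
  obtain ⟨j, hjL, hjR, hj0, hjs0, hne⟩ := he s hs₁ hsR
  have h₁ : d (n + s + j) = e j := hds j hjL (by omega) hj0
  have h₂ : d (n + (j + s)) = e (j + s) := hd (j + s) (by omega) (by omega) hjs0
  rw [add_right_comm, add_assoc] at h₁
  exact hne (h₁.symm.trans h₂)

theorem IsInjectivePattern.not_matches_add (hLR : L ≤ R) (he : IsInjectivePattern L R e)
    (hd : Matches L R e d n) {j : ℤ} (hjL : -(L : ℤ) ≤ j) (hjR : j ≤ (R : ℤ)) (hj0 : j ≠ 0) :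
    ¬Matches L R e d (n + j) := by
  rcases hj0.lt_or_gt with hneg | hpos
  · intro hdj
    refine he.not_matches_add_pos hdj (s := -j) (by omega) (by omega) ?_
    rwa [add_neg_cancel_right]
  · exact he.not_matches_add_pos hd hpos hjR

theorem IsInjectivePattern.tau_matches (hLR : L ≤ R) (he : IsInjectivePattern L R e)
    (h : Matches L R e c n) : Matches L R e (tau L R e c) n :=
  h.congr fun _ hjL hjR hj0 =>
    (tau_apply_of_not_matches (he.not_matches_add hLR h hjL hjR hj0)).symm

end

theorem tau_preserves_matches_general (L R : ℕ) (hLR : L ≤ R)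
    (e : ℤ → ZMod 2) (he : IsInjectivePattern L R e)
    (c : ℤ → ZMod 2) (n : ℤ) :
    Matches L R e (tau L R e c) n ↔ Matches L R e c n := by
  refine ⟨fun hτ => hτ.congr fun j hjL hjR hj0 => ?_, he.tau_matches hLR⟩
  have hc : ¬Matches L R e c (n + j) := fun hcj =>
    he.not_matches_add hLR hτ hjL hjR hj0 (he.tau_matches hLR hcj)
  exact tau_apply_of_not_matches hc

/-- the injective pattern keeps its structure during the revolution. -/
theorem tau_preserves_matches (L R : ℕ) (hL : 1 ≤ L) (hLR : L ≤ R)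
    (e : ℤ → ZMod 2) (he : IsInjectivePattern L R e)
    (c : ℤ → ZMod 2) (n : ℤ) :
    Matches L R e (tau L R e c) n ↔ Matches L R e c n :=
  tau_preserves_matches_general L R hLR e he c n
end

section
/- If a pattern family P satisfies pattern independence, then the patterns mixture-induced global transformation τ_P satisfies τ_P(τ_P(c)) = c for every configuration c; in particular τ_P is injective. -/
/-- `c` matches the pattern `p` of the family (radii `Lp p`, `Rp p`, entries `ep p`,
wildcard at position 0) at position `n`. -/
def MatchesP {ι : Type*} (Lp Rp : ι → ℕ) (ep : ι → ℤ → ZMod 2)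
    (p : ι) (c : ℤ → ZMod 2) (n : ℤ) : Prop :=
  ∀ j : ℤ, -(Lp p : ℤ) ≤ j → j ≤ (Rp p : ℤ) → j ≠ 0 → c (n + j) = ep p j

/-- The pattern family satisfies pattern independence: whenever the center of one
window lies in the other's window (and we are not comparing a pattern with itself at
shift 0), the two patterns disagree at some common non-wildcard position. -/
def PatternIndependence {ι : Type*} (Lp Rp : ι → ℕ) (ep : ι → ℤ → ZMod 2) : Prop :=
  ∀ p q : ι, ∀ s : ℤ, ¬ (p = q ∧ s = 0) →
    ((-(Lp p : ℤ) ≤ s ∧ s ≤ (Rp p : ℤ)) ∨ (-(Lp q : ℤ) ≤ -s ∧ -s ≤ (Rp q : ℤ))) →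
    ∃ j : ℤ, -(Lp p : ℤ) ≤ j ∧ j ≤ (Rp p : ℤ) ∧
      s - (Lp q : ℤ) ≤ j ∧ j ≤ s + (Rp q : ℤ) ∧
      j ≠ 0 ∧ j ≠ s ∧ ep p j ≠ ep q (j - s)

open Classical in
/-- The patterns mixture-induced global transformation `τ_P`. -/
noncomputable def tauP {ι : Type*} (Lp Rp : ι → ℕ) (ep : ι → ℤ → ZMod 2)
    (c : ℤ → ZMod 2) : ℤ → ZMod 2 :=
  fun n => if ∃ p : ι, MatchesP Lp Rp ep p c n then 1 + c n else c n

/-!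
If `c` matches a pattern `p` at `n`, pattern independence forbids any pattern from matching
at another site of `p`'s window, so `τ_P` leaves that window untouched and `τ_P c` still
matches `p` at `n`. Conversely, a match of `τ_P c` at `n` is already a match of `c`: a flipped
site in its window would carry a match of `c`, hence of `τ_P c`, inside that window. Thus
`τ_P` flips exactly the same sites of `c` and of `τ_P c`, and flipping twice in `ZMod 2` is
the identity.
-/

section

variable {ι : Type*} {Lp Rp : ι → ℕ} {ep : ι → ℤ → ZMod 2}

theorem PatternIndependence.not_matchesP_of_mem_window (hind : PatternIndependence Lp Rp ep)
    {p : ι} {c : ℤ → ZMod 2} {n : ℤ} (hp : MatchesP Lp Rp ep p c n)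
    {j : ℤ} (hjL : -(Lp p : ℤ) ≤ j) (hjR : j ≤ (Rp p : ℤ)) (hj0 : j ≠ 0) (q : ι) :
    ¬ MatchesP Lp Rp ep q c (n + j) := by
  intro hq
  obtain ⟨k, hkL, hkR, hkL', hkR', hk0, hkj, hne⟩ :=
    hind p q j (fun h => hj0 h.2) (Or.inl ⟨hjL, hjR⟩)
  have hcq := hq (k - j) (by omega) (by omega) (sub_ne_zero.mpr hkj)
  rw [add_add_sub_cancel] at hcq
  exact hne ((hp k hkL hkR hk0).symm.trans hcq)

theorem tauP_apply_of_not_matchesP {c : ℤ → ZMod 2} {n : ℤ}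
    (h : ∀ q, ¬ MatchesP Lp Rp ep q c n) : tauP Lp Rp ep c n = c n :=
  if_neg (not_exists.mpr h)

theorem tauP_apply_of_matchesP {p : ι} {c : ℤ → ZMod 2} {n : ℤ}
    (h : MatchesP Lp Rp ep p c n) : tauP Lp Rp ep c n = 1 + c n :=
  if_pos ⟨p, h⟩

theorem PatternIndependence.matchesP_tauP (hind : PatternIndependence Lp Rp ep)
    {p : ι} {c : ℤ → ZMod 2} {n : ℤ} (hp : MatchesP Lp Rp ep p c n) :
    MatchesP Lp Rp ep p (tauP Lp Rp ep c) n := fun j hjL hjR hj0 => by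
  rw [tauP_apply_of_not_matchesP (hind.not_matchesP_of_mem_window hp hjL hjR hj0)]
  exact hp j hjL hjR hj0

theorem PatternIndependence.matchesP_of_matchesP_tauP (hind : PatternIndependence Lp Rp ep)
    {p : ι} {c : ℤ → ZMod 2} {n : ℤ} (hp : MatchesP Lp Rp ep p (tauP Lp Rp ep c) n) :
    MatchesP Lp Rp ep p c n := fun j hjL hjR hj0 => by
  have hfixed : ∀ q, ¬ MatchesP Lp Rp ep q c (n + j) := fun q hq =>
    hind.not_matchesP_of_mem_window hp hjL hjR hj0 q (hind.matchesP_tauP hq)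
  rw [← tauP_apply_of_not_matchesP hfixed]
  exact hp j hjL hjR hj0

theorem PatternIndependence.matchesP_tauP_iff (hind : PatternIndependence Lp Rp ep)
    {p : ι} {c : ℤ → ZMod 2} {n : ℤ} :
    MatchesP Lp Rp ep p (tauP Lp Rp ep c) n ↔ MatchesP Lp Rp ep p c n :=
  ⟨hind.matchesP_of_matchesP_tauP, hind.matchesP_tauP⟩

theorem PatternIndependence.tauP_involutive (hind : PatternIndependence Lp Rp ep) :
    Function.Involutive (tauP Lp Rp ep) := fun c => by
  funext n
  by_cases h : ∃ p, MatchesP Lp Rp ep p c n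
  · obtain ⟨p, hp⟩ := h
    rw [tauP_apply_of_matchesP (hind.matchesP_tauP hp), tauP_apply_of_matchesP hp,
      ← add_assoc, CharTwo.add_self_eq_zero, zero_add]
  · rw [not_exists] at h
    rw [tauP_apply_of_not_matchesP fun q => hind.matchesP_tauP_iff.not.mpr (h q),
      tauP_apply_of_not_matchesP h]

end

theorem tauP_involutive_injective_general (ι : Type*)
    (Lp Rp : ι → ℕ) (ep : ι → ℤ → ZMod 2)
    (hind : PatternIndependence Lp Rp ep) :
    (∀ c : ℤ → ZMod 2, tauP Lp Rp ep (tauP Lp Rp ep c) = c) ∧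
    Function.Injective (tauP Lp Rp ep) :=
  ⟨hind.tauP_involutive, hind.tauP_involutive.injective⟩

/-- under pattern independence, the patterns mixture-induced global
transformation is an involution; in particular it is injective. -/
theorem tauP_involutive_injective (ι : Type*) [Fintype ι]
    (Lp Rp : ι → ℕ) (ep : ι → ℤ → ZMod 2)
    (hrad : ∀ p : ι, 1 ≤ Lp p ∧ Lp p ≤ Rp p)
    (hind : PatternIndependence Lp Rp ep) :
    (∀ c : ℤ → ZMod 2, tauP Lp Rp ep (tauP Lp Rp ep c) = c) ∧
    Function.Injective (tauP Lp Rp ep) :=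
  tauP_involutive_injective_general ι Lp Rp ep hind
end
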